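/- arXiv:1709.01365 — 2 statements merged into one kernel-verified Lean document; each statement's English description precedes it below -/
import Mathlib

section
/- For every positive integer q and every positive integer l, the number of pairs (a,b) with 1 ≤ a,b ≤ q and a·b ≡ l² (mod q) equals Σ_{a=1}^{q} gcd(a,q) · e(a·l²/q). -/
/-- `e(x) = exp(2πix)`. -/
noncomputable def e (x : ℝ) : ℂ := Complex.exp (2 * Real.pi * Complex.I * x)

lemma e_add (x y : ℝ) : e (x + y) = e x * e y := by
  simp only [e]
  rw [← Complex.exp_add]
  push_cast
  ring_nf

lemma e_int (n : ℤ) : e n = 1 := by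
  simp only [e]
  rw [show (2 * (Real.pi:ℂ) * Complex.I * ((n:ℝ):ℂ)) = n * (2 * Real.pi * Complex.I) by
    push_cast; ring]
  exact Complex.exp_int_mul_two_pi_mul_I n

lemma e_zero : e 0 = 1 := by simpa using e_int 0

lemma e_nat_mul (k : ℕ) (x : ℝ) : e (k * x) = e x ^ k := by
  simp only [e]
  rw [← Complex.exp_nat_mul]
  push_cast
  ring_nf

/-- orthogonality -/
lemma sum_e_eq (q : ℕ) (hq : 0 < q) (m : ℤ) :
    ∑ k ∈ Finset.range q, e (k * m / q) = if (q:ℤ) ∣ m then (q:ℂ) else 0 := by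
  have hq0 : (q:ℝ) ≠ 0 := Nat.cast_ne_zero.2 hq.ne'
  have hterm : ∀ k : ℕ, e ((k:ℝ) * m / q) = e ((m:ℝ)/q) ^ k := by
    intro k
    rw [← e_nat_mul]
    ring_nf
  by_cases hdvd : (q:ℤ) ∣ m
  · obtain ⟨c, rfl⟩ := hdvd
    rw [if_pos ⟨c, rfl⟩]
    simp only [hterm]
    have : ((q * c : ℤ) : ℝ) / q = (c : ℝ) := by push_cast; field_simp
    rw [this]
    have : e ((c:ℤ):ℝ) = 1 := e_int c
    simp [this]
  · rw [if_neg hdvd]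
    simp only [hterm]
    have hr1 : e ((m:ℝ)/q) ≠ 1 := by
      intro h
      rw [e, Complex.exp_eq_one_iff] at h
      obtain ⟨n, hn⟩ := h
      apply hdvd
      have h2 : (2 * (Real.pi:ℂ) * Complex.I) ≠ 0 := by
        simp [Real.pi_ne_zero, Complex.I_ne_zero]
      have hn' : (((m:ℝ)/q : ℝ) : ℂ) * (2 * Real.pi * Complex.I)
          = (n:ℂ) * (2 * Real.pi * Complex.I) := by rw [← hn]; ring
      have : (((m:ℝ)/q : ℝ) : ℂ) = (n:ℂ) := mul_right_cancel₀ h2 hn'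
      have hre : (m:ℝ)/q = (n:ℝ) := by exact_mod_cast this
      have : (m:ℝ) = n * q := by field_simp at hre; linarith [hre]
      have : m = n * q := by exact_mod_cast this
      exact ⟨n, by linarith [this]⟩
    rw [geom_sum_eq hr1]
    have hq' : e ((m:ℝ)/q) ^ q = 1 := by
      rw [← e_nat_mul]
      have : (q:ℝ) * ((m:ℝ)/q) = ((m:ℤ):ℝ) := by field_simp
      rw [this, e_int]
    rw [hq']
    simp

lemma count_gcd (q : ℕ) (hq : 0 < q) (k : ℕ) :
    ((Finset.Icc 1 q).filter (fun a : ℕ => (q:ℤ) ∣ (k:ℤ) * (a:ℤ))).card = Nat.gcd k q := by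
  set d := Nat.gcd k q with hd
  have hdpos : 0 < d := Nat.gcd_pos_of_pos_right k hq
  have hdq : d ∣ q := Nat.gcd_dvd_right k q
  have hdk : d ∣ k := Nat.gcd_dvd_left k q
  have hiff : ∀ a : ℕ, ((q:ℤ) ∣ (k:ℤ) * (a:ℤ)) ↔ (q / d) ∣ a := by
    intro a
    rw [show ((k:ℤ) * (a:ℤ)) = ((k*a : ℕ) : ℤ) by push_cast; ring, Int.natCast_dvd_natCast]
    constructor
    · intro h'
      obtain ⟨t, ht⟩ := hdq
      obtain ⟨s, hs⟩ := hdk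
      have hco : Nat.Coprime s t := by
        have h0 := Nat.coprime_div_gcd_div_gcd (m := k) (n := q) hdpos
        rw [← hd] at h0
        rwa [show k / d = s from by rw [hs, Nat.mul_div_cancel_left _ hdpos],
            show q / d = t from by rw [ht, Nat.mul_div_cancel_left _ hdpos]] at h0
      have hqd : q / d = t := by rw [ht, Nat.mul_div_cancel_left _ hdpos]
      rw [hqd]
      have : d * t ∣ d * (s * a) := by rw [← ht, ← mul_assoc, ← hs]; exact h'
      have ht' : t ∣ s * a := (mul_dvd_mul_iff_left hdpos.ne').1 this
      exact (Nat.Coprime.dvd_of_dvd_mul_left hco.symm ht')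
    · intro h
      obtain ⟨c, hc⟩ := h
      have : k * a = (k / d) * d * ((q/d) * c) := by
        rw [Nat.div_mul_cancel hdk, hc]
      have h2 : q ∣ k * a := by
        rw [this]
        have : q ∣ d * (q / d * c) := by
          rw [← mul_assoc, Nat.mul_div_cancel' hdq]
          exact Dvd.intro c rfl
        calc q ∣ d * (q/d * c) := this
          _ ∣ k / d * d * (q/d * c) := by
              apply mul_dvd_mul_right
              exact dvd_mul_left d (k/d)
      exact h2
  have : (Finset.Icc 1 q).filter (fun a : ℕ => (q:ℤ) ∣ (k:ℤ) * (a:ℤ))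
      = (Finset.Ioc 0 q).filter (fun a : ℕ => (q/d) ∣ a) := by
    rw [← Finset.Icc_add_one_left_eq_Ioc]
    exact Finset.filter_congr (by intro a _; simpa using hiff a)
  rw [this, Nat.Ioc_filter_dvd_card_eq_div, Nat.div_div_self hdq hq.ne']

lemma sum_Icc_eq_range (q : ℕ) (hq : 0 < q) (f : ℕ → ℂ) (hf : f q = f 0) :
    ∑ x ∈ Finset.Icc 1 q, f x = ∑ x ∈ Finset.range q, f x := by
  have h1 : Finset.range (q+1) = insert 0 (Finset.Icc 1 q) := by
    ext x
    simp only [Finset.mem_range, Finset.mem_insert, Finset.mem_Icc]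
    omega
  have h2 := Finset.sum_range_succ f q
  rw [h1, Finset.sum_insert (by simp)] at h2
  linear_combination h2 + hf

theorem count_pairs_eq_gcd_sum (q : ℕ) (hq : 0 < q) (l : ℕ) (hl : 0 < l) :
    ((((Finset.Icc 1 q) ×ˢ (Finset.Icc 1 q)).filter
        (fun p => (q : ℤ) ∣ ((p.1 : ℤ) * (p.2 : ℤ) - (l : ℤ) ^ 2))).card : ℂ)
      = ∑ a ∈ Finset.Icc 1 q, (Nat.gcd a q : ℂ) * e ((a : ℝ) * (l : ℝ) ^ 2 / q) := by
  have hq0 : (q:ℂ) ≠ 0 := Nat.cast_ne_zero.2 hq.ne'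
  have hqr : (q:ℝ) ≠ 0 := Nat.cast_ne_zero.2 hq.ne'
  apply mul_left_cancel₀ hq0
  -- left side as a double sum of indicators
  have hL : ((((Finset.Icc 1 q) ×ˢ (Finset.Icc 1 q)).filter
        (fun p => (q : ℤ) ∣ ((p.1 : ℤ) * (p.2 : ℤ) - (l : ℤ) ^ 2))).card : ℂ)
      = ∑ p ∈ (Finset.Icc 1 q) ×ˢ (Finset.Icc 1 q),
          (if (q : ℤ) ∣ ((p.1 : ℤ) * (p.2 : ℤ) - (l : ℤ) ^ 2) then (1:ℂ) else 0) := by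
    rw [Finset.card_filter, Nat.cast_sum]
    simp [apply_ite (Nat.cast : ℕ → ℂ)]
  rw [hL, Finset.mul_sum]
  have step1 : ∀ p : ℕ × ℕ,
      (q:ℂ) * (if (q : ℤ) ∣ ((p.1 : ℤ) * (p.2 : ℤ) - (l : ℤ) ^ 2) then (1:ℂ) else 0)
      = ∑ k ∈ Finset.range q,
          e ((k:ℝ) * ((((p.1 : ℤ) * (p.2 : ℤ) - (l : ℤ) ^ 2) : ℤ) : ℝ) / q) := by
    intro p
    rw [sum_e_eq q hq]
    split_ifs <;> ring
  rw [Finset.sum_congr rfl (fun p _ => step1 p)]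
  rw [Finset.sum_product]
  dsimp only
  have swap : (∑ a ∈ Finset.Icc 1 q, ∑ b ∈ Finset.Icc 1 q, ∑ k ∈ Finset.range q,
        e ((k:ℝ) * ((((a : ℤ) * (b : ℤ) - (l : ℤ) ^ 2) : ℤ) : ℝ) / q))
      = ∑ k ∈ Finset.range q, ∑ a ∈ Finset.Icc 1 q, ∑ b ∈ Finset.Icc 1 q,
        e ((k:ℝ) * ((((a : ℤ) * (b : ℤ) - (l : ℤ) ^ 2) : ℤ) : ℝ) / q) := by
    exact (Finset.sum_congr rfl (fun a _ => Finset.sum_comm)).trans Finset.sum_comm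
  rw [swap]
  have step2 : ∀ k ∈ Finset.range q,
      (∑ a ∈ Finset.Icc 1 q, ∑ b ∈ Finset.Icc 1 q,
        e ((k:ℝ) * ((((a : ℤ) * (b : ℤ) - (l : ℤ) ^ 2) : ℤ) : ℝ) / q))
      = e (-((k:ℝ) * (l:ℝ)^2)/q) * ((Nat.gcd k q : ℂ) * q) := by
    intro k hk
    have inner : ∀ a : ℕ, (∑ b ∈ Finset.Icc 1 q,
        e ((k:ℝ) * ((((a : ℤ) * (b : ℤ) - (l : ℤ) ^ 2) : ℤ) : ℝ) / q))
        = e (-((k:ℝ) * (l:ℝ)^2)/q) * (if (q:ℤ) ∣ (k:ℤ) * (a:ℤ) then (q:ℂ) else 0) := by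
      intro a
      have hterm : ∀ b : ℕ,
          e ((k:ℝ) * ((((a : ℤ) * (b : ℤ) - (l : ℤ) ^ 2) : ℤ) : ℝ) / q)
          = e (-((k:ℝ) * (l:ℝ)^2)/q) * e ((b:ℝ) * (((k * a : ℕ):ℤ) : ℝ) / q) := by
        intro b
        rw [← e_add]
        congr 1
        push_cast
        ring
      rw [Finset.sum_congr rfl (fun b _ => hterm b), ← Finset.mul_sum]
      congr 1
      rw [sum_Icc_eq_range q hq _ (by
        have h1 : (q:ℝ) * (((k * a : ℕ):ℤ) : ℝ) / q = (((k*a : ℕ):ℤ) : ℝ) := by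
          field_simp
        rw [h1, e_int]
        norm_num [e_zero])]
      rw [sum_e_eq q hq ((k * a : ℕ) : ℤ)]
      rw [show ((k * a : ℕ) : ℤ) = (k:ℤ) * (a:ℤ) by push_cast; ring]
    rw [Finset.sum_congr rfl (fun a _ => inner a), ← Finset.mul_sum]
    congr 1
    rw [← Finset.sum_filter, Finset.sum_const, count_gcd q hq k]
    simp [mul_comm]
  rw [Finset.sum_congr rfl step2]
  -- right side: convert Icc to range
  have hR : (∑ a ∈ Finset.Icc 1 q, (Nat.gcd a q : ℂ) * e ((a : ℝ) * (l : ℝ) ^ 2 / q))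
      = ∑ a ∈ Finset.range q, (Nat.gcd a q : ℂ) * e ((a : ℝ) * (l : ℝ) ^ 2 / q) := by
    apply sum_Icc_eq_range q hq
    have h1 : (q:ℝ) * (l:ℝ)^2 / q = (((l^2 : ℕ):ℤ) : ℝ) := by push_cast; field_simp
    rw [h1, e_int, Nat.gcd_self, Nat.gcd_zero_left]
    norm_num [e_zero]
  rw [hR]
  -- final bijection k ↦ (q - k) % q
  have main : ∑ k ∈ Finset.range q, e (-((k:ℝ) * (l:ℝ)^2)/q) * ((Nat.gcd k q : ℂ) * q)
      = ∑ a ∈ Finset.range q, (q:ℂ) * ((Nat.gcd a q : ℂ) * e ((a : ℝ) * (l : ℝ) ^ 2 / q)) := by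
    apply Finset.sum_nbij' (i := fun k => (q - k) % q) (j := fun a => (q - a) % q)
    · intro k hk
      exact Finset.mem_range.2 (Nat.mod_lt _ hq)
    · intro a ha
      exact Finset.mem_range.2 (Nat.mod_lt _ hq)
    · intro k hk
      rw [Finset.mem_range] at hk
      rcases Nat.eq_zero_or_pos k with rfl | hkpos
      · simp
      · have h1 : q - k < q := by omega
        rw [Nat.mod_eq_of_lt h1]
        have h2 : q - (q - k) = k := by omega
        rw [h2, Nat.mod_eq_of_lt hk]
    · intro a ha
      rw [Finset.mem_range] at ha
      rcases Nat.eq_zero_or_pos a with rfl | hapos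
      · simp
      · have h1 : q - a < q := by omega
        rw [Nat.mod_eq_of_lt h1]
        have h2 : q - (q - a) = a := by omega
        rw [h2, Nat.mod_eq_of_lt ha]
    · intro k hk
      rw [Finset.mem_range] at hk
      rcases Nat.eq_zero_or_pos k with rfl | hkpos
      · simp only [Nat.sub_zero, Nat.mod_self]
        norm_num
        ring
      · have h1 : q - k < q := by omega
        rw [Nat.mod_eq_of_lt h1]
        have hg : Nat.gcd (q - k) q = Nat.gcd k q := Nat.gcd_self_sub_left hk.le
        rw [hg]
        have he : e (((q - k : ℕ):ℝ) * (l:ℝ)^2 / q) = e (-((k:ℝ) * (l:ℝ)^2)/q) := by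
          have harg : ((q - k : ℕ):ℝ) * (l:ℝ)^2 / q
              = (((l^2 : ℕ):ℤ) : ℝ) + (-((k:ℝ) * (l:ℝ)^2)/q) := by
            rw [Nat.cast_sub hk.le]
            push_cast
            field_simp
            ring
          rw [harg, e_add, e_int, one_mul]
        rw [he]
        ring
  rw [main, ← Finset.mul_sum]
end

section
/- For every complex number s with Re(s) > 3/2, one has Σ_{q=1}^{∞} ρ_q(0)/q^{s} = ζ(s)·ζ(2s−1)/ζ(2s), where ζ is the Riemann zeta function; equivalently, the generalized Dirichlet L-function 𝓛_0(s) := (ζ(2s)/ζ(s)) · Σ_{q=1}^{∞} ρ_q(0)/q^{s} equals ζ(2s−1). -/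
/-!
Write `q = d² m` with `m` squarefree. Then `4q ∣ x²` iff `2dm ∣ x`, so `ρ_q(0) = d`; and `e² ∣ q`
iff `e ∣ d`, so Gauss' identity `∑_{e ∣ d} φ(e) = d` says that `q ↦ ρ_q(0)` is the Dirichlet
convolution of `1` with `φ` placed on the squares. Hence its L-series is
`ζ(s) · ∑ φ(e) e^{-2s} = ζ(s) ζ(2s - 1) / ζ(2s)`, using `1 ⍟ φ = id` once more.
-/

/-- `ρ_q(n) = #{x (mod 2q) : x² ≡ n (mod 4q)}`. -/
def rho (q : ℕ) (n : ℤ) : ℕ :=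
  ((Finset.range (2 * q)).filter (fun x : ℕ => ((4 * q : ℕ) : ℤ) ∣ ((x : ℤ) ^ 2 - n))).card

open LSeries Finset
open scoped LSeries.notation

theorem Squarefree.sq_mul_dvd_sq_iff {m c x : ℕ} (hm : Squarefree m) :
    c ^ 2 * m ∣ x ^ 2 ↔ c * m ∣ x := by
  refine ⟨fun h => ?_, fun ⟨y, hy⟩ => ⟨m * y ^ 2, by rw [hy]; ring⟩⟩
  rcases eq_or_ne c 0 with rfl | hc
  · simp_all
  obtain ⟨y, rfl⟩ := (Nat.pow_dvd_pow_iff two_ne_zero).mp (dvd_of_mul_right_dvd h)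
  rw [mul_pow, Nat.mul_dvd_mul_iff_left (pow_pos (Nat.pos_of_ne_zero hc) 2),
    hm.dvd_pow_iff_dvd two_ne_zero] at h
  exact mul_dvd_mul_left c h

theorem Squarefree.sq_dvd_sq_mul_iff {m d e : ℕ} (hm : Squarefree m) :
    e ^ 2 ∣ d ^ 2 * m ↔ e ∣ d := by
  refine ⟨fun h => ?_, fun h => dvd_mul_of_dvd_left (pow_dvd_pow_of_dvd h 2) m⟩
  rcases Nat.eq_zero_or_pos (e.gcd d) with hg | hg
  · rw [Nat.gcd_eq_zero_iff] at hg
    simp [hg.2]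
  -- after cancelling `g = gcd e d`, the cofactor `e'` is coprime to `d'`, so `e'² ∣ m`
  obtain ⟨g, e', d', hg0, hcop, rfl, rfl⟩ := Nat.exists_coprime' hg
  rw [mul_pow, mul_pow, mul_right_comm, Nat.mul_dvd_mul_iff_right (pow_pos hg0 2)] at h
  have he' : IsUnit e' := hm e' (by simpa [sq] using (hcop.pow 2 2).dvd_of_dvd_mul_left h)
  simp [Nat.isUnit_iff.mp he']

theorem Nat.card_filter_dvd_range_mul {c : ℕ} (hc : 0 < c) (k : ℕ) :
    #{x ∈ range (k * c) | c ∣ x} = k := by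
  have := Nat.count_modEq_card (k * c) hc 0
  simp only [Nat.modEq_zero_iff_dvd, Nat.count_eq_card_filter_range] at this
  simpa [Nat.mul_div_cancel _ hc] using this

theorem rho_sq_mul_squarefree {m : ℕ} (hm : Squarefree m) (d : ℕ) : rho (d ^ 2 * m) 0 = d := by
  rcases Nat.eq_zero_or_pos d with rfl | hd
  · simp [rho]
  have hdvd (x : ℕ) : ((4 * (d ^ 2 * m) : ℕ) : ℤ) ∣ (x : ℤ) ^ 2 - 0 ↔ 2 * d * m ∣ x := by
    rw [sub_zero, ← Nat.cast_pow, Int.natCast_dvd_natCast, ← hm.sq_mul_dvd_sq_iff]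
    ring_nf
  rw [rho, filter_congr fun x _ => hdvd x, show 2 * (d ^ 2 * m) = d * (2 * d * m) by ring,
    Nat.card_filter_dvd_range_mul (by have := Nat.pos_of_ne_zero hm.ne_zero; positivity)]

theorem LSeries.one_convolution_apply {R : Type*} [Semiring R] (g : ℕ → R) (n : ℕ) :
    (1 ⍟ g) n = ∑ d ∈ n.divisors, g d := by
  simp only [convolution_def, Pi.one_apply, one_mul]
  exact Nat.sum_divisorsAntidiagonal' (fun _ b => g b)

theorem LSeries_eq_tsum_add_one (f : ℕ → ℂ) (s : ℂ) :
    L f s = ∑' q : ℕ, f (q + 1) / ((q + 1 : ℕ) : ℂ) ^ s := by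
  have hsupp : Function.support (term f s) ⊆ Set.range (· + 1) := fun n hn =>
    (Nat.exists_eq_add_one_of_ne_zero fun h => hn (by rw [h, term_zero])).imp fun _ h => h.symm
  rw [LSeries, ← (add_left_injective 1).tsum_eq hsupp]
  exact tsum_congr fun q => term_of_ne_zero q.succ_ne_zero f s

theorem LSeries.term_natCast (s : ℂ) : term (fun n : ℕ => (n : ℂ)) s = term 1 (s - 1) := by
  funext n
  rcases eq_or_ne n 0 with rfl | hn
  · simp
  have hn' : (n : ℂ) ≠ 0 := Nat.cast_ne_zero.mpr hn
  rw [term_of_ne_zero hn, term_of_ne_zero hn, Pi.one_apply, Complex.cpow_sub _ _ hn',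
    Complex.cpow_one, one_div_div]

theorem LSeries_natCast_eq_riemannZeta {s : ℂ} (hs : 2 < s.re) :
    L (fun n : ℕ => (n : ℂ)) s = riemannZeta (s - 1) := by
  have hs1 : 1 < (s - 1).re := by rw [Complex.sub_re, Complex.one_re]; linarith
  rw [LSeries, term_natCast, ← LSeries, LSeries_one_eq_riemannZeta hs1]

theorem one_convolution_totient :
    (1 : ℕ → ℂ) ⍟ (fun n => (n.totient : ℂ)) = fun n : ℕ => (n : ℂ) := by
  funext n
  rw [one_convolution_apply]
  exact_mod_cast Nat.sum_totient n

theorem LSeriesSummable_totient {s : ℂ} (hs : 2 < s.re) :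
    LSeriesSummable (fun n => (n.totient : ℂ)) s :=
  LSeriesSummable_of_le_const_mul_rpow (x := 2) hs ⟨1, fun n _ => by
    rw [one_mul, show (2 : ℝ) - 1 = 1 by norm_num, Real.rpow_one, Complex.norm_natCast]
    exact_mod_cast Nat.totient_le n⟩

theorem LSeries_totient {s : ℂ} (hs : 2 < s.re) :
    L (fun n => (n.totient : ℂ)) s = riemannZeta (s - 1) / riemannZeta s := by
  have hs1 : 1 < s.re := by linarith
  rw [eq_div_iff (riemannZeta_ne_zero_of_one_lt_re hs1), ← LSeries_natCast_eq_riemannZeta hs,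
    ← one_convolution_totient, LSeries_convolution' (LSeriesSummable_one_iff.mpr hs1)
      (LSeriesSummable_totient hs), LSeries_one_eq_riemannZeta hs1, mul_comm]

theorem Nat.sq_injective : Function.Injective (fun e : ℕ => e ^ 2) :=
  Nat.pow_left_injective two_ne_zero

noncomputable def onSquares {R : Type*} [Zero R] (f : ℕ → R) : ℕ → R :=
  Function.extend (· ^ 2) f 0

section onSquares

variable {R : Type*} [Zero R]

theorem onSquares_sq (f : ℕ → R) (e : ℕ) : onSquares f (e ^ 2) = f e :=
  Nat.sq_injective.extend_apply f 0 e

theorem onSquares_of_forall_ne {f : ℕ → R} {n : ℕ} (h : ∀ e, e ^ 2 ≠ n) : onSquares f n = 0 :=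
  Function.extend_apply' f (0 : ℕ → R) n fun ⟨e, he⟩ => h e he

end onSquares

theorem LSeries.term_onSquares (f : ℕ → ℂ) (s : ℂ) :
    term (onSquares f) s = onSquares (term f (2 * s)) := by
  funext n
  by_cases h : ∃ e, e ^ 2 = n
  · obtain ⟨e, rfl⟩ := h
    rw [onSquares_sq]
    rcases eq_or_ne e 0 with rfl | he
    · simp
    rw [term_of_ne_zero (pow_ne_zero 2 he), term_of_ne_zero he, onSquares_sq, Nat.cast_pow,
      ← Complex.natCast_cpow_natCast_mul, Nat.cast_ofNat]
  · simp [term_def, onSquares_of_forall_ne (not_exists.mp h)]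

theorem LSeriesSummable_onSquares_iff {f : ℕ → ℂ} {s : ℂ} :
    LSeriesSummable (onSquares f) s ↔ LSeriesSummable f (2 * s) := by
  rw [LSeriesSummable, term_onSquares]
  exact summable_extend_zero Nat.sq_injective

theorem LSeries_onSquares (f : ℕ → ℂ) (s : ℂ) : L (onSquares f) s = L f (2 * s) := by
  rw [LSeries, term_onSquares]
  exact tsum_extend_zero Nat.sq_injective _

theorem one_convolution_onSquares_sq_mul {m : ℕ} (hm : Squarefree m) (f : ℕ → ℂ) (d : ℕ) :
    (1 ⍟ onSquares f) (d ^ 2 * m) = ∑ e ∈ d.divisors, f e := by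
  rcases eq_or_ne d 0 with rfl | hd
  · simp
  have hn : d ^ 2 * m ≠ 0 := mul_ne_zero (pow_ne_zero 2 hd) hm.ne_zero
  have hsub : d.divisors.image (· ^ 2) ⊆ (d ^ 2 * m).divisors := by
    simp only [subset_iff, mem_image, Nat.mem_divisors]
    rintro _ ⟨e, ⟨he, -⟩, rfl⟩
    exact ⟨hm.sq_dvd_sq_mul_iff.mpr he, hn⟩
  have hzero : ∀ b ∈ (d ^ 2 * m).divisors, b ∉ d.divisors.image (· ^ 2) → onSquares f b = 0 := by
    simp only [mem_image, Nat.mem_divisors, not_exists, not_and]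
    rintro b ⟨hb, -⟩ hnot
    exact onSquares_of_forall_ne fun e he => hnot e ⟨hm.sq_dvd_sq_mul_iff.mp (he ▸ hb), hd⟩ he
  rw [one_convolution_apply, ← sum_subset hsub hzero,
    sum_image fun _ _ _ _ h => Nat.sq_injective h]
  simp only [onSquares_sq]

theorem rho_zero_eq_one_convolution_onSquares_totient :
    (fun n => (rho n 0 : ℂ)) = 1 ⍟ onSquares (fun n => (n.totient : ℂ)) := by
  funext n
  obtain ⟨m, d, rfl, hm⟩ := Nat.sq_mul_squarefree n
  rw [one_convolution_onSquares_sq_mul hm, rho_sq_mul_squarefree hm]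
  exact_mod_cast (Nat.sum_totient d).symm

theorem LSeries_rho_zero {s : ℂ} (hs : 3 / 2 < s.re) :
    L (fun n => (rho n 0 : ℂ)) s =
      riemannZeta s * riemannZeta (2 * s - 1) / riemannZeta (2 * s) := by
  have hs1 : 1 < s.re := by linarith
  have hs2 : 2 < (2 * s).re := by
    simp only [Complex.mul_re, Complex.re_ofNat, Complex.im_ofNat, zero_mul, sub_zero]; linarith
  rw [rho_zero_eq_one_convolution_onSquares_totient,
    LSeries_convolution' (LSeriesSummable_one_iff.mpr hs1)
      (LSeriesSummable_onSquares_iff.mpr (LSeriesSummable_totient hs2)),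
    LSeries_one_eq_riemannZeta hs1, LSeries_onSquares, LSeries_totient hs2, mul_div_assoc]

theorem rho_zero_dirichlet_series (s : ℂ) (hs : 3 / 2 < s.re) :
    (∑' q : ℕ, (rho (q + 1) 0 : ℂ) / ((q + 1 : ℕ) : ℂ) ^ s
      = riemannZeta s * riemannZeta (2 * s - 1) / riemannZeta (2 * s)) ∧
    (riemannZeta (2 * s) / riemannZeta s) *
        ∑' q : ℕ, (rho (q + 1) 0 : ℂ) / ((q + 1 : ℕ) : ℂ) ^ s
      = riemannZeta (2 * s - 1) := by
  have hL := LSeries_rho_zero hs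
  rw [LSeries_eq_tsum_add_one] at hL
  have hz1 : riemannZeta s ≠ 0 := riemannZeta_ne_zero_of_one_lt_re (by linarith)
  have hz2 : riemannZeta (2 * s) ≠ 0 := riemannZeta_ne_zero_of_one_lt_re (by
    simp only [Complex.mul_re, Complex.re_ofNat, Complex.im_ofNat, zero_mul, sub_zero]; linarith)
  refine ⟨hL, ?_⟩
  rw [hL]
  field_simp
end
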